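/- arXiv:0907.3412 — 6 statements merged into one kernel-verified Lean document; each statement's English description precedes it below -/
import Mathlib

section
/- For every natural number t, 5^(32t+11) + 2·3^(32t+12) + 1 ≡ 2^6 (mod 2^7). -/
/-! The units modulo 2^7 form a group of exponent 32, so 5^32 ≡ 3^32 ≡ 1 and the left-hand side
does not depend on t modulo 2^7; at t = 0 it is checked directly. -/

theorem Nat.ModEq.pow_mul_add_of_pow_modEq_one {a n m : ℕ} (h : a ^ n ≡ 1 [MOD m]) (t k : ℕ) :
    a ^ (n * t + k) ≡ a ^ k [MOD m] := by
  rw [pow_add, pow_mul]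
  simpa using (h.pow t).mul_right (a ^ k)

theorem stmt_4 (t : ℕ) :
    5 ^ (32 * t + 11) + 2 * 3 ^ (32 * t + 12) + 1 ≡ 2 ^ 6 [MOD 2 ^ 7] := by
  have h5 : 5 ^ (32 * t + 11) ≡ 5 ^ 11 [MOD 2 ^ 7] :=
    Nat.ModEq.pow_mul_add_of_pow_modEq_one (by decide) t 11
  have h3 : 3 ^ (32 * t + 12) ≡ 3 ^ 12 [MOD 2 ^ 7] :=
    Nat.ModEq.pow_mul_add_of_pow_modEq_one (by decide) t 12
  calc 5 ^ (32 * t + 11) + 2 * 3 ^ (32 * t + 12) + 1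
      ≡ 5 ^ 11 + 2 * 3 ^ 12 + 1 [MOD 2 ^ 7] := (h5.add (h3.mul_left 2)).add_right 1
    _ ≡ 2 ^ 6 [MOD 2 ^ 7] := by decide
end

section
/- For every natural number t, v_2(S(32t + 12, 5)) = 3 and v_2(S(32t + 15, 5)) = 3. -/
/-! Modulo 16, the row `(S(n,0), …, S(n,5))` is driven by the recurrence alone, so the rows
form an orbit of one map on a finite set. From `n = 12` on this orbit is periodic with period 32,
and `S(n,5) ≡ 8 (mod 16)` at `n = 12` and `n = 15`; a number congruent to `8` modulo `16` has
2-adic valuation exactly `3`. -/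

/-- Stirling numbers of the second kind, via the recurrence
`S(n+1,k+1) = S(n,k) + (k+1) * S(n,k+1)`. -/
def stirling2 : ℕ → ℕ → ℕ
  | 0, 0 => 1
  | 0, _ + 1 => 0
  | _ + 1, 0 => 0
  | n + 1, k + 1 => stirling2 n k + (k + 1) * stirling2 n (k + 1)

lemma padicValNat_eq_of_mod_pow_succ_eq_pow {p k x : ℕ} (hp : 1 < p)
    (hx : x % p ^ (k + 1) = p ^ k) : padicValNat p x = k := by
  have hpk : p ^ k ≠ 0 := (pow_pos (by omega) k).ne'
  have hx0 : x ≠ 0 := by rintro rfl; exact hpk (by simpa using hx.symm)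
  rw [padicValNat_def' (by omega) hx0]
  refine multiplicity_eq_of_dvd_of_not_dvd ?_ fun h => hpk ?_
  · exact (Nat.dvd_mod_iff (pow_dvd_pow p k.le_succ)).mp (hx ▸ dvd_rfl)
  · rwa [← hx, ← Nat.dvd_iff_mod_eq_zero]

def stirling2RowMod (m k n : ℕ) : List ℕ :=
  (List.range (k + 1)).map fun j => stirling2 n j % m

def stirling2RowStep (m : ℕ) (l : List ℕ) : List ℕ :=
  (List.range l.length).map fun j =>
    if j = 0 then 0 else (l.getD (j - 1) 0 + j * l.getD j 0) % m

lemma stirling2RowMod_getD {m k n j : ℕ} (hj : j ≤ k) :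
    (stirling2RowMod m k n).getD j 0 = stirling2 n j % m := by
  simp [stirling2RowMod, List.getD_eq_getElem?_getD, Nat.lt_succ_of_le hj]

lemma stirling2RowMod_succ (m k n : ℕ) :
    stirling2RowMod m k (n + 1) = stirling2RowStep m (stirling2RowMod m k n) := by
  refine List.ext_getElem (by simp [stirling2RowMod, stirling2RowStep]) fun j hj _ => ?_
  have hjk : j ≤ k := by simpa [stirling2RowMod, Nat.lt_succ_iff] using hj
  rw [← List.getD_eq_getElem _ 0, stirling2RowMod_getD hjk]
  simp only [stirling2RowStep, List.getElem_map, List.getElem_range]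
  rcases j with _ | j
  · simp [stirling2]
  · rw [if_neg j.succ_ne_zero, Nat.add_sub_cancel, stirling2RowMod_getD (by omega),
      stirling2RowMod_getD hjk, stirling2]
    simp [Nat.add_mod, Nat.mul_mod]

lemma stirling2RowMod_add (m k n i : ℕ) :
    stirling2RowMod m k (n + i) = (stirling2RowStep m)^[i] (stirling2RowMod m k n) := by
  induction i with
  | zero => rfl
  | succ i ih => rw [← Nat.add_assoc, stirling2RowMod_succ, ih, Function.iterate_succ_apply']

lemma stirling2_five_mod_sixteen (t : ℕ) :
    stirling2 (32 * t + 12) 5 % 16 = 8 ∧ stirling2 (32 * t + 15) 5 % 16 = 8 := by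
  have hrow : stirling2RowMod 16 5 12 = [0, 1, 15, 14, 13, 8] := by decide
  have hperiodic : Function.IsPeriodicPt (stirling2RowStep 16) 32 [0, 1, 15, 14, 13, 8] := by
    decide
  have h12 : stirling2RowMod 16 5 (32 * t + 12) = [0, 1, 15, 14, 13, 8] := by
    rw [add_comm, stirling2RowMod_add, hrow, (hperiodic.mul_const t).eq]
  have h15 : stirling2RowMod 16 5 (32 * t + 15) = [0, 1, 15, 13, 14, 8] := by
    rw [stirling2RowMod_add _ _ (32 * t + 12) 3, h12]
    decide
  rw [← stirling2RowMod_getD le_rfl, ← stirling2RowMod_getD le_rfl, h12, h15]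
  decide

theorem stmt_5 (t : ℕ) :
    padicValNat 2 (stirling2 (32 * t + 12) 5) = 3 ∧
    padicValNat 2 (stirling2 (32 * t + 15) 5) = 3 := by
  obtain ⟨h12, h15⟩ := stirling2_five_mod_sixteen t
  exact ⟨padicValNat_eq_of_mod_pow_succ_eq_pow one_lt_two h12,
    padicValNat_eq_of_mod_pow_succ_eq_pow one_lt_two h15⟩
end

section
/- For every natural number t, v_2(S(32t + 28, 5)) > 3 and v_2(S(32t + 31, 5)) > 3. -/
theorem stirling2_eq_stirlingSecond : stirling2 = Nat.stirlingSecond := by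
  funext n k
  induction n generalizing k with
  | zero => cases k <;> rfl
  | succ n ih =>
    cases k with
    | zero => rfl
    | succ k => rw [stirling2, Nat.stirlingSecond_succ_succ, ih, ih, add_comm]

namespace Nat

theorem stirlingSecond_pos {n k : ℕ} (hk : 0 < k) (hkn : k ≤ n) : 0 < stirlingSecond n k := by
  induction n generalizing k with
  | zero => omega
  | succ n ih =>
    obtain ⟨k, rfl⟩ := Nat.exists_eq_add_of_le' hk
    rw [stirlingSecond_succ_succ]
    rcases Nat.lt_or_ge k n with h | h
    · have := ih k.succ_pos h
      positivity
    · rw [show k = n by omega, stirlingSecond_self]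
      exact Nat.succ_pos _

theorem stirlingSecond_add_modEq_of_modEq {m K a b : ℕ}
    (h : ∀ k ≤ K, stirlingSecond a k ≡ stirlingSecond b k [MOD m]) (j : ℕ) :
    ∀ k ≤ K, stirlingSecond (a + j) k ≡ stirlingSecond (b + j) k [MOD m] := by
  induction j with
  | zero => exact h
  | succ j ih =>
    rintro (_ | k) hk
    · rfl
    · rw [← add_assoc, ← add_assoc, stirlingSecond_succ_succ, stirlingSecond_succ_succ]
      exact ((ih _ hk).mul_left _).add (ih _ (by omega))

theorem stirlingSecond_add_mul_modEq {m K a p : ℕ}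
    (h : ∀ k ≤ K, stirlingSecond (a + p) k ≡ stirlingSecond a k [MOD m]) (i t : ℕ) :
    ∀ k ≤ K, stirlingSecond (a + i + p * t) k ≡ stirlingSecond (a + i) k [MOD m] := by
  induction t with
  | zero => intro k _; rfl
  | succ t ih =>
    intro k hk
    have hshift := stirlingSecond_add_modEq_of_modEq h (i + p * t) k hk
    rw [show a + p + (i + p * t) = a + i + p * (t + 1) by ring, ← add_assoc] at hshift
    exact hshift.trans (ih k hk)

end Nat

theorem stmt_6 (t : ℕ) :
    3 < padicValNat 2 (stirling2 (32 * t + 28) 5) ∧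
    3 < padicValNat 2 (stirling2 (32 * t + 31) 5) := by
  have hperiod : ∀ k ≤ 5,
      Nat.stirlingSecond (28 + 32) k ≡ Nat.stirlingSecond 28 k [MOD 2 ^ 4] := by
    intro k hk
    -- `simp` caches the values it has already rewritten, so unfolding the recurrence is cheap.
    interval_cases k <;> simp [Nat.stirlingSecond_succ_succ, Nat.ModEq]
  have three_lt_of_modEq : ∀ i, Nat.stirlingSecond (28 + i) 5 ≡ 0 [MOD 2 ^ 4] →
      3 < padicValNat 2 (stirling2 (32 * t + 28 + i) 5) := by
    intro i hi
    have hmod := Nat.stirlingSecond_add_mul_modEq hperiod i t 5 le_rfl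
    rw [stirling2_eq_stirlingSecond, show 32 * t + 28 + i = 28 + i + 32 * t by ring]
    exact (padicValNat_dvd_iff_le (Nat.stirlingSecond_pos (by norm_num) (by omega)).ne').1
      (Nat.modEq_zero_iff_dvd.1 (hmod.trans hi))
  exact ⟨three_lt_of_modEq 0 (by simp [Nat.stirlingSecond_succ_succ, Nat.ModEq]),
    three_lt_of_modEq 3 (by simp [Nat.stirlingSecond_succ_succ, Nat.ModEq])⟩
end

section
/- For every natural number t, v_2(S(64t + 60, 5)) = 4 and v_2(S(64t + 63, 5)) = 4. -/
open Finset Nat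

section ClosedForm

variable {R : Type*} [CommRing R]

lemma alternating_sum_range_succ_choose_mul_pow_succ (k n : ℕ) :
    ∑ i ∈ range (k + 2), (-1 : R) ^ (k + 1 - i) * (k + 1).choose i * (i : R) ^ (n + 1) =
      (k + 1) * ∑ i ∈ range (k + 1), (-1 : R) ^ (k - i) * k.choose i * ((i : R) + 1) ^ n := by
  rw [sum_range_succ', mul_sum]
  simp only [Nat.cast_zero, zero_pow n.succ_ne_zero, mul_zero, add_zero]
  refine sum_congr rfl fun i _ => ?_
  have h := congrArg (Nat.cast : ℕ → R) (add_one_mul_choose_eq k i)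
  push_cast at h
  rw [Nat.add_sub_add_right]
  push_cast
  linear_combination -(-1 : R) ^ (k - i) * ((i : R) + 1) ^ n * h

lemma alternating_sum_range_choose_mul_pow_add_succ (k n : ℕ) :
    ∑ i ∈ range (k + 1), (-1 : R) ^ (k - i) * k.choose i * (i : R) ^ n +
      ∑ i ∈ range (k + 2), (-1 : R) ^ (k + 1 - i) * (k + 1).choose i * (i : R) ^ n =
      ∑ i ∈ range (k + 1), (-1 : R) ^ (k - i) * k.choose i * ((i : R) + 1) ^ n := by
  have hpascal : ∑ i ∈ range (k + 2), (-1 : R) ^ (k + 1 - i) * (k + 1).choose i * (i : R) ^ n =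
      ∑ i ∈ range (k + 1), (-1 : R) ^ (k - i) * k.choose i * ((i : R) + 1) ^ n +
      ∑ i ∈ range (k + 1), (-1 : R) ^ (k - i) * k.choose (i + 1) * ((i : R) + 1) ^ n +
      (-1) ^ (k + 1) * 0 ^ n := by
    rw [sum_range_succ', ← sum_add_distrib]
    simp only [choose_succ_succ', Nat.add_sub_add_right]
    push_cast
    simp only [choose_zero_right, Nat.cast_one, mul_one, mul_add, add_mul]
  have hcancel : ∑ i ∈ range (k + 1), (-1 : R) ^ (k - i) * k.choose i * (i : R) ^ n +
      ∑ i ∈ range (k + 1), (-1 : R) ^ (k - i) * k.choose (i + 1) * ((i : R) + 1) ^ n =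
      (-1) ^ k * 0 ^ n := by
    rw [sum_range_succ', sum_range_succ (fun i => _ * _ * _), choose_succ_self]
    simp only [Nat.cast_zero, mul_zero, zero_mul, add_zero, choose_zero_right, Nat.cast_one,
      mul_one, Nat.sub_zero]
    rw [add_right_comm, ← sum_add_distrib, add_eq_right]
    refine sum_eq_zero fun i hi => ?_
    obtain ⟨j, hj⟩ : ∃ j, k - i = j + 1 := ⟨k - i - 1, by simp only [mem_range] at hi; omega⟩
    rw [hj, show k - (i + 1) = j by omega]
    push_cast
    ring
  rw [hpascal]
  linear_combination hcancel

theorem factorial_mul_stirling2 (n k : ℕ) :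
    (k ! : R) * stirling2 n k =
      ∑ i ∈ range (k + 1), (-1 : R) ^ (k - i) * k.choose i * (i : R) ^ n := by
  induction n generalizing k with
  | zero =>
    cases k with
    | zero => simp [stirling2]
    | succ k =>
      have h := add_pow (1 : R) (-1) (k + 1)
      simp only [add_neg_cancel, one_pow, one_mul, zero_pow k.succ_ne_zero] at h
      simpa [stirling2] using h
  | succ n ih =>
    cases k with
    | zero => simp [stirling2]
    | succ k =>
      rw [alternating_sum_range_succ_choose_mul_pow_succ,
        ← alternating_sum_range_choose_mul_pow_add_succ, ← ih k, ← ih (k + 1), stirling2,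
        factorial_succ]
      push_cast
      ring

theorem stirling2_five (n : ℕ) (hn : n ≠ 0) :
    (120 : R) * stirling2 n 5 = 5 ^ n - 5 * 4 ^ n + 10 * 3 ^ n - 10 * 2 ^ n + 5 := by
  have h := factorial_mul_stirling2 (R := R) n 5
  norm_num [sum_range_succ, zero_pow hn, factorial, Nat.choose] at h
  linear_combination h

end ClosedForm

theorem stirling2_five_add_sixty_four_modEq {n : ℕ} (hn : 8 ≤ n) :
    stirling2 (n + 64) 5 ≡ stirling2 n 5 [MOD 32] := by
  have h256 : 8 * (15 * stirling2 (n + 64) 5) ≡ 8 * (15 * stirling2 n 5) [MOD 8 * 32] := by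
    rw [← ZMod.natCast_eq_natCast_iff]
    push_cast
    rw [← mul_assoc, ← mul_assoc, show (8 * 15 : ZMod (8 * 32)) = 120 by norm_num,
      stirling2_five _ (by omega), stirling2_five _ (by omega)]
    obtain ⟨m, rfl⟩ : ∃ m, n = m + 8 := ⟨n - 8, by omega⟩
    have h5 : (5 : ZMod (8 * 32)) ^ 64 = 1 := by decide
    have h3 : (3 : ZMod (8 * 32)) ^ 64 = 1 := by decide
    have h4 : (4 : ZMod (8 * 32)) ^ 8 = 0 := by decide
    have h2 : (2 : ZMod (8 * 32)) ^ 8 = 0 := by decide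
    simp only [pow_add, h5, h3, h4, h2]
    ring
  exact (h256.mul_left_cancel' (by norm_num)).cancel_left_of_coprime (by norm_num)

theorem stirling2_five_sixty_four_mul_add_modEq (t : ℕ) {r : ℕ} (hr : 8 ≤ r) :
    stirling2 (64 * t + r) 5 ≡ stirling2 r 5 [MOD 32] := by
  induction t with
  | zero => simp only [mul_zero, zero_add, Nat.ModEq.refl]
  | succ t ih =>
    calc stirling2 (64 * (t + 1) + r) 5 = stirling2 (64 * t + r + 64) 5 := by ring_nf
      _ ≡ stirling2 (64 * t + r) 5 [MOD 32] := stirling2_five_add_sixty_four_modEq (by omega)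
      _ ≡ stirling2 r 5 [MOD 32] := ih

theorem padicValNat_eq_of_modEq_pow {p k m : ℕ} [hp : Fact p.Prime]
    (h : m ≡ p ^ k [MOD p ^ (k + 1)]) : padicValNat p m = k := by
  have hlt : p ^ k < p ^ (k + 1) := Nat.pow_lt_pow_right hp.out.one_lt k.lt_succ_self
  have hm : m = p ^ k * (p * (m / p ^ (k + 1)) + 1) := by
    have := Nat.div_add_mod m (p ^ (k + 1))
    rw [h, Nat.mod_eq_of_lt hlt] at this
    rw [pow_succ] at this ⊢
    linarith
  have hndvd : ¬ p ∣ p * (m / p ^ (k + 1)) + 1 :=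
    fun hd => hp.out.one_lt.ne' (Nat.dvd_one.mp ((Nat.dvd_add_right (dvd_mul_right _ _)).mp hd))
  rw [hm, padicValNat.mul (pow_ne_zero _ hp.out.ne_zero) (by omega), padicValNat.prime_pow,
    padicValNat.eq_zero_of_not_dvd hndvd, add_zero]

theorem stmt_7 (t : ℕ) :
    padicValNat 2 (stirling2 (64 * t + 60) 5) = 4 ∧
    padicValNat 2 (stirling2 (64 * t + 63) 5) = 4 := by
  have base (r : ℕ) (hr : r = 60 ∨ r = 63) : stirling2 r 5 ≡ 2 ^ 4 [MOD 2 ^ (4 + 1)] := by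
    have h := stirling2_five (R := ℤ) r (by omega)
    rcases hr with rfl | rfl <;> norm_num at h <;> unfold Nat.ModEq <;> omega
  exact ⟨padicValNat_eq_of_modEq_pow
      ((stirling2_five_sixty_four_mul_add_modEq t (by norm_num)).trans (base 60 (by simp))),
    padicValNat_eq_of_modEq_pow
      ((stirling2_five_sixty_four_mul_add_modEq t (by norm_num)).trans (base 63 (by simp)))⟩
end

section
/- For every natural number t, v_2(S(64t + 28, 5)) > 4 and v_2(S(64t + 31, 5)) > 4. -/
lemma stirling2_formula (n : ℕ) :
    ((stirling2 n 0 : ℤ) = 0 ^ n) ∧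
    ((stirling2 n 1 : ℤ) = 1 - 0 ^ n) ∧
    (2 * (stirling2 n 2 : ℤ) = 2 ^ n - 2 + 0 ^ n) ∧
    (6 * (stirling2 n 3 : ℤ) = 3 ^ n - 3 * 2 ^ n + 3 - 0 ^ n) ∧
    (24 * (stirling2 n 4 : ℤ) = 4 ^ n - 4 * 3 ^ n + 6 * 2 ^ n - 4 + 0 ^ n) ∧
    (120 * (stirling2 n 5 : ℤ) =
      5 ^ n - 5 * 4 ^ n + 10 * 3 ^ n - 10 * 2 ^ n + 5 - 0 ^ n) := by
  induction n with
  | zero => simp [stirling2]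
  | succ n ih =>
    obtain ⟨h0, h1, h2, h3, h4, h5⟩ := ih
    refine ⟨?_, ?_, ?_, ?_, ?_, ?_⟩
    · simp [stirling2]
    · show ((stirling2 n 0 + 1 * stirling2 n 1 : ℕ) : ℤ) = _
      push_cast
      linear_combination h0 + h1
    · show 2 * ((stirling2 n 1 + 2 * stirling2 n 2 : ℕ) : ℤ) = _
      push_cast
      linear_combination 2 * h1 + 2 * h2
    · show 6 * ((stirling2 n 2 + 3 * stirling2 n 3 : ℕ) : ℤ) = _
      push_cast
      linear_combination 3 * h2 + 3 * h3
    · show 24 * ((stirling2 n 3 + 4 * stirling2 n 4 : ℕ) : ℤ) = _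
      push_cast
      linear_combination 4 * h3 + 4 * h4
    · show 120 * ((stirling2 n 4 + 5 * stirling2 n 5 : ℕ) : ℤ) = _
      push_cast
      linear_combination 5 * h4 + 5 * h5

lemma stirling2_five_pos (n : ℕ) (hn : 5 ≤ n) : 0 < stirling2 n 5 := by
  obtain ⟨m, rfl⟩ := Nat.exists_eq_add_of_le hn
  induction m with
  | zero => decide
  | succ m ih =>
    have : stirling2 (5 + (m + 1)) 5 = stirling2 (5 + m) 4 + 5 * stirling2 (5 + m) 5 := by
      show stirling2 (5 + m + 1) 5 = _
      rfl
    rw [this]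
    have := ih
    omega

lemma key_dvd (n : ℕ) (h8 : 8 ≤ n)
    (hc : (5 : ZMod 256) ^ n + 10 * 3 ^ n + 5 = 0) : 32 ∣ stirling2 n 5 := by
  have h5 := (stirling2_formula n).2.2.2.2.2
  obtain ⟨m, rfl⟩ := Nat.exists_eq_add_of_le h8
  have h256 : ((120 * stirling2 (8 + m) 5 : ℕ) : ZMod 256) = 0 := by
    have := congrArg (fun z : ℤ => (z : ZMod 256)) h5
    push_cast at this ⊢
    rw [this]
    have h4 : (4 : ZMod 256) ^ (8 + m) = 0 := by
      rw [pow_add]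
      have : (4 : ZMod 256) ^ 8 = 0 := by decide
      rw [this, zero_mul]
    have h2 : (2 : ZMod 256) ^ (8 + m) = 0 := by
      rw [pow_add]
      have : (2 : ZMod 256) ^ 8 = 0 := by decide
      rw [this, zero_mul]
    have h0 : (0 : ZMod 256) ^ (8 + m) = 0 := by
      simp
    rw [h4, h2, h0] at *
    rw [mul_zero, mul_zero]
    linear_combination hc
  have hdvd : (256 : ℕ) ∣ 120 * stirling2 (8 + m) 5 :=
    (ZMod.natCast_eq_zero_iff _ _).mp h256
  obtain ⟨c, hc'⟩ := hdvd
  have h15 : (32 : ℕ) ∣ 15 * stirling2 (8 + m) 5 := ⟨c, by omega⟩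
  exact (Nat.Coprime.dvd_of_dvd_mul_left (by norm_num) h15)

lemma val_bound (n : ℕ) (h8 : 8 ≤ n)
    (hc : (5 : ZMod 256) ^ n + 10 * 3 ^ n + 5 = 0) :
    4 < padicValNat 2 (stirling2 n 5) := by
  have hpos : 0 < stirling2 n 5 := stirling2_five_pos n (by omega)
  have : (2 : ℕ) ^ 5 ∣ stirling2 n 5 := key_dvd n h8 hc
  have := (padicValNat_dvd_iff_le (p := 2) (n := 5) hpos.ne').mp this
  omega

theorem stmt_8 (t : ℕ) :
    4 < padicValNat 2 (stirling2 (64 * t + 28) 5) ∧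
    4 < padicValNat 2 (stirling2 (64 * t + 31) 5) := by
  have hper : ∀ r : ℕ, (5 : ZMod 256) ^ (64 * t + r) = 5 ^ r ∧
      (3 : ZMod 256) ^ (64 * t + r) = 3 ^ r := by
    intro r
    have h5 : (5 : ZMod 256) ^ 64 = 1 := by decide
    have h3 : (3 : ZMod 256) ^ 64 = 1 := by decide
    constructor <;> rw [pow_add, pow_mul]
    · rw [h5, one_pow, one_mul]
    · rw [h3, one_pow, one_mul]
  constructor
  · refine val_bound _ (by omega) ?_
    rw [(hper 28).1, (hper 28).2]
    decide
  · refine val_bound _ (by omega) ?_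
    rw [(hper 31).1, (hper 31).2]
    decide
end

section
/- For every natural number t, v_2(S(128t + 92, 5)) = 5 and v_2(S(128t + 95, 5)) = 5. -/
/-!
The closed formula `(-1)^k k! S(n,k) = ∑ⱼ (-1)^j C(k,j) j^n` gives
`120 S(n,5) = 5^n - 5·4^n + 10·3^n - 10·2^n + 5`. Modulo `2^9` the powers of `2` and `4` vanish
once `n ≥ 9`, and `3`, `5` have order dividing `128`, so `120 S(n,5) mod 2^9` depends only on
`n mod 128`. For `n = 92, 95` it is `2^8`, whence `v₂(S(n,5)) = 8 - v₂(120) = 5`.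
-/

open Finset Nat

theorem mul_choose_succ_eq_succ_mul_sub_choose (k j : ℕ) (hj : j ≤ k + 1) :
    (j * (k + 1).choose j : ℤ) = (k + 1) * ((k + 1).choose j - k.choose j) := by
  have hsub : ((k + 1 - j : ℕ) : ℤ) = k + 1 - j := by push_cast [hj]; ring
  have h : (k.choose j * (k + 1) : ℤ) = (k + 1).choose j * (k + 1 - j) := by
    rw [← hsub]; exact_mod_cast Nat.choose_mul_succ_eq k j
  linear_combination h

theorem sum_alternating_choose_mul_pow_succ (n k : ℕ) :
    ∑ j ∈ range (k + 2), (-1) ^ j * ((k + 1).choose j : ℤ) * (j : ℤ) ^ (n + 1) =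
      (k + 1) * (∑ j ∈ range (k + 2), (-1) ^ j * ((k + 1).choose j : ℤ) * (j : ℤ) ^ n -
        ∑ j ∈ range (k + 1), (-1) ^ j * (k.choose j : ℤ) * (j : ℤ) ^ n) := by
  have hk : ∑ j ∈ range (k + 2), (-1) ^ j * (k.choose j : ℤ) * (j : ℤ) ^ n =
      ∑ j ∈ range (k + 1), (-1) ^ j * (k.choose j : ℤ) * (j : ℤ) ^ n := by
    simp [sum_range_succ _ (k + 1)]
  rw [← hk, mul_sub, mul_sum, mul_sum, ← sum_sub_distrib]
  refine sum_congr rfl fun j hj => ?_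
  have h := mul_choose_succ_eq_succ_mul_sub_choose k j (Nat.lt_succ_iff.mp (mem_range.mp hj))
  linear_combination (-1) ^ j * (j : ℤ) ^ n * h

theorem neg_one_pow_mul_factorial_mul_stirling2 (n k : ℕ) :
    (-1) ^ k * k ! * (stirling2 n k : ℤ) =
      ∑ j ∈ range (k + 1), (-1) ^ j * (k.choose j : ℤ) * (j : ℤ) ^ n := by
  induction n generalizing k with
  | zero =>
    cases k with
    | zero => simp [stirling2]
    | succ k =>
      simpa [stirling2] using (Int.alternating_sum_range_choose (n := k + 1)).symm
  | succ n ih =>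
    cases k with
    | zero => simp [stirling2]
    | succ k =>
      rw [sum_alternating_choose_mul_pow_succ, ← ih, ← ih]
      simp only [stirling2, factorial_succ]
      push_cast
      ring

theorem cast_stirling2_five {R : Type*} [CommRing R] {n : ℕ} (hn : n ≠ 0) :
    ((120 * stirling2 n 5 : ℕ) : R) = 5 ^ n - 5 * 4 ^ n + 10 * 3 ^ n - 10 * 2 ^ n + 5 := by
  have h := neg_one_pow_mul_factorial_mul_stirling2 n 5
  simp only [sum_range_succ, range_zero, sum_empty] at h
  norm_num [zero_pow hn, factorial, Nat.choose] at h
  have hℤ : ((120 * stirling2 n 5 : ℕ) : ℤ) = 5 ^ n - 5 * 4 ^ n + 10 * 3 ^ n - 10 * 2 ^ n + 5 := by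
    push_cast; linear_combination -h
  rw [← Int.cast_natCast, hℤ]
  push_cast
  ring

theorem cast_stirling2_five_zmod512 (t r : ℕ) (hr : 9 ≤ r) :
    ((120 * stirling2 (128 * t + r) 5 : ℕ) : ZMod 512) = 5 ^ r + 10 * 3 ^ r + 5 := by
  have h2 : (2 : ZMod 512) ^ r = 0 := pow_eq_zero_of_le hr (by decide)
  have h4 : (4 : ZMod 512) ^ r = 0 := pow_eq_zero_of_le (by omega : 5 ≤ r) (by decide)
  have h3 : (3 : ZMod 512) ^ 128 = 1 := by reduce_mod_char
  have h5 : (5 : ZMod 512) ^ 128 = 1 := by reduce_mod_char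
  rw [cast_stirling2_five (by omega)]
  simp only [pow_add, pow_mul, h3, h5, h2, h4, one_pow, one_mul, mul_zero, sub_zero]

theorem padicValNat_eq_of_mod_two_pow_succ {x k : ℕ} (h : x % 2 ^ (k + 1) = 2 ^ k) :
    padicValNat 2 x = k := by
  obtain ⟨q, rfl⟩ : ∃ q, x = 2 ^ k * (2 * q + 1) := ⟨x / 2 ^ (k + 1), by
    rw [pow_succ] at h ⊢; have := Nat.div_add_mod x (2 ^ k * 2); rw [h] at this; linarith⟩
  rw [padicValNat.mul (by positivity) (by positivity), padicValNat.prime_pow,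
    padicValNat.eq_zero_of_not_dvd (by omega), add_zero]

theorem padicValNat_stirling2_five_eq_five {n : ℕ}
    (h : ((120 * stirling2 n 5 : ℕ) : ZMod 512) = 256) : padicValNat 2 (stirling2 n 5) = 5 := by
  have hmod : 120 * stirling2 n 5 % 2 ^ 9 = 2 ^ 8 := by
    rw [← ZMod.val_natCast, h]; rfl
  have hval := padicValNat_eq_of_mod_two_pow_succ hmod
  have hS : stirling2 n 5 ≠ 0 := by rintro h0; simp [h0] at hmod
  rw [padicValNat.mul (by norm_num) hS, show padicValNat 2 120 = 3 from
    padicValNat_eq_of_mod_two_pow_succ (k := 3) rfl] at hval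
  omega

theorem stmt_9 (t : ℕ) :
    padicValNat 2 (stirling2 (128 * t + 92) 5) = 5 ∧
    padicValNat 2 (stirling2 (128 * t + 95) 5) = 5 := by
  constructor <;> apply padicValNat_stirling2_five_eq_five
  · rw [cast_stirling2_five_zmod512 t 92 (by norm_num)]; reduce_mod_char
  · rw [cast_stirling2_five_zmod512 t 95 (by norm_num)]; reduce_mod_char
end
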